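/- arXiv:2312.08375 — 5 statements merged into one kernel-verified Lean document; each statement's English description precedes it below -/
import Mathlib

section
/- On two-valued interpretations, the ultimate approximation operator agrees with the two-valued model operator: if V2 S w then ΓX S L C S w = S and Γv S L C S w = G S L C w (extensional set equalities). -/
variable {α : Type*}

def Subs (A B : α → Prop) : Prop := ∀ x, A x → B x

def V2 (S w : α → Prop) : Prop := Subs w S

def V3 (S X v : α → Prop) : Prop := Subs X S ∧ Subs v X

def inter (A B : α → Prop) : α → Prop := fun x => A x ∧ B x

def parent (S : α → Prop) (L : α → α → Prop) (a : α) : α → Prop :=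
  fun b => L b a ∧ S b

def restrictedC (S : α → Prop) (L : α → α → Prop)
    (C : α → (α → Prop) → Prop) (s : α) (X : α → Prop) : Prop :=
  ∃ A, C s A ∧ inter A (parent S L s) = X

def G (S : α → Prop) (L : α → α → Prop) (C : α → (α → Prop) → Prop)
    (w : α → Prop) : α → Prop :=
  fun s => S s ∧ restrictedC S L C s (inter w (parent S L s))

def leqi (X1 v1 X2 v2 : α → Prop) : Prop :=
  Subs X1 X2 ∧ ∀ s, X1 s → (v2 s ↔ v1 s)

def approxTwoVal (X v S w : α → Prop) : Prop :=
  V2 S w ∧ leqi X v S w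

def GammaX (S : α → Prop) (L : α → α → Prop) (C : α → (α → Prop) → Prop)
    (X v : α → Prop) : α → Prop :=
  fun s => S s ∧ ∀ w1 w2, approxTwoVal X v S w1 → approxTwoVal X v S w2 →
    (G S L C w1 s ↔ G S L C w2 s)

def Gammav (S : α → Prop) (L : α → α → Prop) (C : α → (α → Prop) → Prop)
    (X v : α → Prop) : α → Prop :=
  fun s => S s ∧ ∀ w, approxTwoVal X v S w → G S L C w s

def model (S : α → Prop) (L : α → α → Prop) (C : α → (α → Prop) → Prop)
    (w : α → Prop) : Prop :=
  V2 S w ∧ G S L C w = w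

def admissible (S : α → Prop) (L : α → α → Prop) (C : α → (α → Prop) → Prop)
    (X v : α → Prop) : Prop :=
  V3 S X v ∧ leqi X v (GammaX S L C X v) (Gammav S L C X v)

def complete (S : α → Prop) (L : α → α → Prop) (C : α → (α → Prop) → Prop)
    (X v : α → Prop) : Prop :=
  V3 S X v ∧ GammaX S L C X v = X ∧ Gammav S L C X v = v

def preferred (S : α → Prop) (L : α → α → Prop) (C : α → (α → Prop) → Prop)
    (X v : α → Prop) : Prop :=
  admissible S L C X v ∧
    ∀ X' v', admissible S L C X' v' ∧ leqi X v X' v' → X' = X ∧ v' = v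

def grounded (S : α → Prop) (L : α → α → Prop) (C : α → (α → Prop) → Prop)
    (X v : α → Prop) : Prop :=
  complete S L C X v ∧ ∀ X' v', complete S L C X' v' → leqi X v X' v'

def reductL (L : α → α → Prop) (w : α → Prop) : α → α → Prop :=
  fun s1 s2 => L s1 s2 ∧ w s1 ∧ w s2

def reductC (C : α → (α → Prop) → Prop) (w : α → Prop) :
    α → (α → Prop) → Prop :=
  fun s X => w s ∧ C s X ∧ ∀ s', ¬ w s' → ¬ X s'

def stable (S : α → Prop) (L : α → α → Prop) (C : α → (α → Prop) → Prop)
    (w : α → Prop) : Prop :=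
  model S L C w ∧ grounded w (reductL L w) (reductC C w) w w

theorem V2_Gamma_G_relation (S : α → Prop) (L : α → α → Prop)
    (C : α → (α → Prop) → Prop) (w : α → Prop) (h : V2 S w) :
    GammaX S L C S w = S ∧ Gammav S L C S w = G S L C w := by
  have key : ∀ w', approxTwoVal S w S w' → ∀ s, G S L C w' s ↔ G S L C w s := by
    intro w' ⟨hv2, _, hag⟩ s
    have hi : inter w' (parent S L s) = inter w (parent S L s) := by
      funext b
      simp only [inter, parent]
      apply propext
      constructor
      · rintro ⟨hw, hL, hS⟩; exact ⟨(hag b hS).mp hw, hL, hS⟩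
      · rintro ⟨hw, hL, hS⟩; exact ⟨(hag b hS).mpr hw, hL, hS⟩
    simp only [G, hi]
  have happ : approxTwoVal S w S w := ⟨h, fun _ h => h, fun s _ => Iff.rfl⟩
  constructor
  · funext s
    apply propext
    constructor
    · exact fun hs => hs.1
    · intro hs
      exact ⟨hs, fun w1 w2 h1 h2 => (key w1 h1 s).trans (key w2 h2 s).symm⟩
  · funext s
    apply propext
    constructor
    · intro hs; exact hs.2 w happ
    · intro hg
      exact ⟨hg.1, fun w' hw' => (key w' hw' s).mpr hg⟩
end

section
/- The ultimate approximation operator Γ is monotone with respect to the information ordering: if (X, v) and (X', v') are three-valued interpretations over S with (X, v) ≤ᵢ (X', v'), then (ΓX S L C X v, Γv S L C X v) ≤ᵢ (ΓX S L C X' v', Γv S L C X' v'). -/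
variable {α : Type*}

theorem Gamma_info_ordering_monotone (S : α → Prop) (L : α → α → Prop)
    (C : α → (α → Prop) → Prop) (X v X' v' : α → Prop)
    (h1 : V3 S X v) (h2 : V3 S X' v') (h3 : leqi X v X' v') :
    leqi (GammaX S L C X v) (Gammav S L C X v)
      (GammaX S L C X' v') (Gammav S L C X' v') := by
  -- any approximation of (X',v') is an approximation of (X,v)
  have key : ∀ w, approxTwoVal X' v' S w → approxTwoVal X v S w := by
    rintro w ⟨hw, hXS, hvw⟩
    refine ⟨hw, h1.1, fun s hXs => ?_⟩
    rw [hvw s (h3.1 s hXs), h3.2 s hXs]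
  -- v' is an approximation of (X',v')
  have hv' : approxTwoVal X' v' S v' := by
    refine ⟨fun s hs => h2.1 s (h2.2 s hs), fun s hs => h2.1 s hs, fun s _ => Iff.rfl⟩
  constructor
  · rintro s ⟨hSs, hG⟩
    exact ⟨hSs, fun w1 w2 a1 a2 => hG w1 w2 (key w1 a1) (key w2 a2)⟩
  · rintro s ⟨hSs, hG⟩
    constructor
    · rintro ⟨_, h⟩
      exact ⟨hSs, fun w hw => (hG w v' hw (key v' hv')).mpr (h v' hv')⟩
    · rintro ⟨_, h⟩
      exact ⟨hSs, fun w hw => h w (key w hw)⟩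
end

section
/- Every two-valued model of an ADF, viewed as the three-valued interpretation (S, w), is a preferred interpretation: for all S, L, C, w, if model S L C w then preferred S L C S w. -/
variable {α : Type*}

theorem model_to_preferred (S : α → Prop) (L : α → α → Prop)
    (C : α → (α → Prop) → Prop) (w : α → Prop) :
    model S L C w → preferred S L C S w := by
  rintro ⟨hV2, hG⟩
  have key : ∀ w1 : α → Prop, approxTwoVal S w S w1 → w1 = w := by
    rintro w1 ⟨hw1, _, hagree⟩
    funext s
    apply propext
    constructor
    · intro h; exact (hagree s (hw1 s h)).mp h
    · intro h; exact (hagree s (hV2 s h)).mpr h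
  have hself : approxTwoVal S w S w := ⟨hV2, fun _ h => h, fun _ _ => Iff.rfl⟩
  constructor
  · refine ⟨⟨fun _ h => h, hV2⟩, ?_, ?_⟩
    · intro s hs
      refine ⟨hs, fun w1 w2 h1 h2 => ?_⟩
      rw [key w1 h1, key w2 h2]
    · intro s hs
      constructor
      · rintro ⟨_, hall⟩
        have := hall w hself
        rw [hG] at this
        exact this
      · intro hws
        refine ⟨hs, fun w1 h1 => ?_⟩
        rw [key w1 h1, hG]
        exact hws
  · rintro X' v' ⟨⟨⟨hXS, hvX⟩, _⟩, hSX, hagree⟩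
    have hX : X' = S := funext fun s => propext ⟨hXS s, hSX s⟩
    constructor
    · exact hX
    · funext s
      apply propext
      constructor
      · intro h; exact (hagree s (hXS s (hvX s h))).mp h
      · intro h; exact (hagree s (hV2 s h)).mpr h
end

section
/- Every preferred interpretation of an ADF is complete: for all S, L, C, X, v, if preferred S L C X v then complete S L C X v. -/
variable {α : Type*}

lemma leqi_trans {X1 v1 X2 v2 X3 v3 : α → Prop} (h12 : leqi X1 v1 X2 v2)
    (h23 : leqi X2 v2 X3 v3) : leqi X1 v1 X3 v3 := by
  refine ⟨fun x hx => h23.1 x (h12.1 x hx), fun s hs => ?_⟩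
  exact (h23.2 s (h12.1 s hs)).trans (h12.2 s hs)

lemma approx_mono {S X1 v1 X2 v2 w : α → Prop} (h : leqi X1 v1 X2 v2)
    (hw : approxTwoVal X2 v2 S w) : approxTwoVal X1 v1 S w :=
  ⟨hw.1, leqi_trans h hw.2⟩

lemma gamma_mono (S : α → Prop) (L : α → α → Prop) (C : α → (α → Prop) → Prop)
    {X1 v1 X2 v2 : α → Prop} (hV : V3 S X2 v2) (h : leqi X1 v1 X2 v2) :
    leqi (GammaX S L C X1 v1) (Gammav S L C X1 v1)
      (GammaX S L C X2 v2) (Gammav S L C X2 v2) := by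
  classical
  -- a canonical witness approximated by (X2, v2)
  set w0 : α → Prop := fun s => (X2 s ∧ v2 s) ∨ (¬ X2 s ∧ S s) with hw0
  have hw0app : approxTwoVal X2 v2 S w0 := by
    refine ⟨fun x hx => ?_, fun x hx => hV.1 x hx, fun s hs => ?_⟩
    · rcases hx with ⟨hx, hv⟩ | ⟨_, hS⟩
      · exact hV.1 x hx
      · exact hS
    · constructor
      · rintro (⟨_, hv⟩ | ⟨hn, _⟩)
        · exact hv
        · exact absurd hs hn
      · intro hv; exact Or.inl ⟨hs, hv⟩
  constructor
  · intro s hs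
    exact ⟨hs.1, fun w1 w2 h1 h2 => hs.2 w1 w2 (approx_mono h h1) (approx_mono h h2)⟩
  · intro s hs
    constructor
    · intro h2
      refine ⟨hs.1, fun w hw => ?_⟩
      have hagree := hs.2 w w0 hw (approx_mono h hw0app)
      exact hagree.mpr (h2.2 w0 hw0app)
    · intro h1
      exact ⟨hs.1, fun w hw => h1.2 w (approx_mono h hw)⟩

theorem preferred_to_complete (S : α → Prop) (L : α → α → Prop)
    (C : α → (α → Prop) → Prop) (X v : α → Prop) :
    preferred S L C X v → complete S L C X v := by
  rintro ⟨⟨hV3, hle⟩, hmax⟩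
  set X' := GammaX S L C X v with hX'
  set v' := Gammav S L C X v with hv'
  have hV3' : V3 S X' v' := by
    refine ⟨fun s hs => hs.1, fun s hs => ⟨hs.1, fun w1 w2 h1 h2 => ?_⟩⟩
    exact ⟨fun _ => hs.2 w2 h2, fun _ => hs.2 w1 h1⟩
  have hadm' : admissible S L C X' v' :=
    ⟨hV3', gamma_mono S L C hV3' hle⟩
  obtain ⟨hXeq, hveq⟩ := hmax X' v' ⟨hadm', hle⟩
  exact ⟨hV3, hXeq, hveq⟩
end

section
/- For two-valued interpretations, being a model is equivalent to being preferred and to being complete: for all S, L, C, w, model S L C w ↔ preferred S L C S w, and model S L C w ↔ complete S L C S w. -/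
variable {α : Type*}

lemma approx_eq {S v w : α → Prop} (hv : V2 S v)
    (h : approxTwoVal S v S w) : w = v := by
  funext s
  apply propext
  exact ⟨fun hw => (h.2.2 s (h.1 s hw)).mp hw,
         fun hvs => (h.2.2 s (hv s hvs)).mpr hvs⟩

lemma approx_self {S v : α → Prop} (hv : V2 S v) : approxTwoVal S v S v :=
  ⟨hv, fun _ h => h, fun _ _ => Iff.rfl⟩

lemma gammaX_eq (S : α → Prop) (L : α → α → Prop)
    (C : α → (α → Prop) → Prop) {v : α → Prop} (hv : V2 S v) :
    GammaX S L C S v = S := by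
  funext s
  apply propext
  refine ⟨fun h => h.1, fun hs => ⟨hs, fun w1 w2 h1 h2 => ?_⟩⟩
  rw [approx_eq hv h1, approx_eq hv h2]

lemma model_iff_complete (S : α → Prop) (L : α → α → Prop)
    (C : α → (α → Prop) → Prop) (w : α → Prop) :
    model S L C w ↔ complete S L C S w := by
  constructor
  · rintro ⟨hw, hG⟩
    refine ⟨⟨fun _ h => h, hw⟩, gammaX_eq S L C hw, ?_⟩
    funext s
    apply propext
    constructor
    · intro h
      have := h.2 w (approx_self hw)
      rwa [hG] at this
    · intro hws
      exact ⟨hw s hws, fun w' ha => by rw [approx_eq hw ha, hG]; exact hws⟩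
  · rintro ⟨⟨_, hw⟩, _, hGv⟩
    refine ⟨hw, ?_⟩
    funext s
    apply propext
    constructor
    · intro hG
      have : Gammav S L C S w s :=
        ⟨hG.1, fun w' ha => by rw [approx_eq hw ha]; exact hG⟩
      rwa [hGv] at this
    · intro hws
      have : Gammav S L C S w s := by rw [hGv]; exact hws
      exact this.2 w (approx_self hw)

lemma model_iff_preferred (S : α → Prop) (L : α → α → Prop)
    (C : α → (α → Prop) → Prop) (w : α → Prop) :
    model S L C w ↔ preferred S L C S w := by
  constructor
  · intro hm
    have hc := (model_iff_complete S L C w).mp hm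
    have hw : V2 S w := hm.1
    refine ⟨⟨hc.1, ?_⟩, ?_⟩
    · rw [hc.2.1, hc.2.2]
      exact ⟨fun _ h => h, fun _ _ => Iff.rfl⟩
    · rintro X' v' ⟨⟨⟨hX'S, hv'X'⟩, _⟩, hSX', hvv'⟩
      have hX : X' = S := by
        funext s; exact propext ⟨fun h => hX'S s h, fun h => hSX' s h⟩
      subst hX
      refine ⟨rfl, ?_⟩
      funext s
      apply propext
      exact ⟨fun h => (hvv' s (hv'X' s h)).mp h,
             fun h => (hvv' s (hw s h)).mpr h⟩
  · rintro ⟨⟨⟨_, hw⟩, _, hleq⟩, _⟩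
    refine ⟨hw, ?_⟩
    funext s
    apply propext
    constructor
    · intro hG
      exact (hleq s hG.1).mp
        ⟨hG.1, fun w' ha => by rw [approx_eq hw ha]; exact hG⟩
    · intro hws
      exact ((hleq s (hw s hws)).mpr hws).2 w (approx_self hw)

theorem V2_model_equiv_preferred_complete (S : α → Prop) (L : α → α → Prop)
    (C : α → (α → Prop) → Prop) (w : α → Prop) :
    (model S L C w ↔ preferred S L C S w) ∧
      (model S L C w ↔ complete S L C S w) :=
  ⟨model_iff_preferred S L C w, model_iff_complete S L C w⟩
end
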